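/- If G is a connected graph of order n with edge metric dimension n−1, then every two distinct vertices of G have a common neighbor. -/
import Mathlib


open SimpleGraph

/-- Distance from a vertex `v` to an edge `e = uw`: `min (d v u) (d v w)`. -/
noncomputable def edgeDist {V : Type*} (G : SimpleGraph V) (v : V) (e : Sym2 V) : ℕ :=
  Sym2.lift ⟨fun u w => min (G.dist v u) (G.dist v w), fun u w => by simp [min_comm]⟩ e

/-- `S` is an edge metric generator: every two distinct edges are distinguished
by some vertex of `S`. -/
def IsEdgeMetricGenerator {V : Type*} (G : SimpleGraph V) (S : Set V) : Prop :=
  ∀ e₁ ∈ G.edgeSet, ∀ e₂ ∈ G.edgeSet, e₁ ≠ e₂ →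
    ∃ v ∈ S, edgeDist G v e₁ ≠ edgeDist G v e₂

/-- The edge metric dimension: minimum cardinality of an edge metric generator. -/
noncomputable def edim {V : Type*} (G : SimpleGraph V) : ℕ :=
  sInf {k | ∃ S : Finset V, S.card = k ∧ IsEdgeMetricGenerator G ↑S}

lemma edgeDist_mk {V : Type*} (G : SimpleGraph V) (v a b : V) :
    edgeDist G v s(a, b) = min (G.dist v a) (G.dist v b) := rfl

lemma edgeDist_eq_zero_of_mem {V : Type*} (G : SimpleGraph V) {w : V} {e : Sym2 V}
    (h : w ∈ e) : edgeDist G w e = 0 := by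
  induction e using Sym2.ind with
  | _ a b =>
    rw [edgeDist_mk]
    rcases Sym2.mem_iff.mp h with rfl | rfl <;> simp [SimpleGraph.dist_self]

lemma edgeDist_pos_of_notMem {V : Type*} {G : SimpleGraph V} (hG : G.Connected)
    {w : V} {e : Sym2 V} (h : w ∉ e) : 0 < edgeDist G w e := by
  induction e using Sym2.ind with
  | _ a b =>
    rw [edgeDist_mk]
    simp only [Sym2.mem_iff, not_or] at h
    exact lt_min (hG.pos_dist_of_ne h.1) (hG.pos_dist_of_ne h.2)

lemma distinguish {V : Type*} {G : SimpleGraph V} (hG : G.Connected)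
    {w : V} {e₁ e₂ : Sym2 V} (h1 : w ∈ e₁) (h2 : w ∉ e₂) :
    edgeDist G w e₁ ≠ edgeDist G w e₂ := by
  rw [edgeDist_eq_zero_of_mem G h1]
  exact (edgeDist_pos_of_notMem hG h2).ne

lemma key {V : Type*} {G : SimpleGraph V} (hG : G.Connected) {u v : V}
    (hno : ∀ w, G.Adj u w → ¬ G.Adj v w)
    {a b c d : V} (hab : G.Adj a b) (hcd : G.Adj c d) (hne : s(a,b) ≠ s(c,d)) :
    ∃ w : V, w ≠ u ∧ w ≠ v ∧ edgeDist G w s(a,b) ≠ edgeDist G w s(c,d) := by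
  -- find p in e₁ \ e₂
  have hp : ∃ p, p ∈ s(a,b) ∧ p ∉ s(c,d) := by
    by_contra hcon
    push_neg at hcon
    have ha := hcon a (Sym2.mem_mk_left a b)
    have hb := hcon b (Sym2.mem_mk_right a b)
    apply hne
    rcases Sym2.mem_iff.mp ha with rfl | rfl <;> rcases Sym2.mem_iff.mp hb with rfl | rfl <;>
      first
        | exact absurd rfl hab.ne
        | rfl
        | exact Sym2.eq_swap
  have hq : ∃ q, q ∈ s(c,d) ∧ q ∉ s(a,b) := by
    by_contra hcon
    push_neg at hcon
    have ha := hcon c (Sym2.mem_mk_left c d)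
    have hb := hcon d (Sym2.mem_mk_right c d)
    apply hne
    rcases Sym2.mem_iff.mp ha with rfl | rfl <;> rcases Sym2.mem_iff.mp hb with rfl | rfl <;>
      first
        | exact absurd rfl hcd.ne
        | rfl
        | exact Sym2.eq_swap
  obtain ⟨p, hp1, hp2⟩ := hp
  obtain ⟨q, hq1, hq2⟩ := hq
  by_cases hpu : p ≠ u ∧ p ≠ v
  · exact ⟨p, hpu.1, hpu.2, distinguish hG hp1 hp2⟩
  by_cases hqu : q ≠ u ∧ q ≠ v
  · exact ⟨q, hqu.1, hqu.2, (distinguish hG hq1 hq2).symm⟩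
  push_neg at hpu hqu
  have hpu' : p = u ∨ p = v := by tauto
  have hqu' : q = u ∨ q = v := by tauto
  clear hpu hqu
  -- other endpoints
  set x := Sym2.Mem.other hp1 with hxdef
  have hxspec : s(p, x) = s(a, b) := Sym2.other_spec hp1
  have hpx : G.Adj p x := by
    rw [← SimpleGraph.mem_edgeSet] at hab ⊢
    rw [hxspec]; exact hab
  set y := Sym2.Mem.other hq1 with hydef
  have hyspec : s(q, y) = s(c, d) := Sym2.other_spec hq1
  have hqy : G.Adj q y := by
    rw [← SimpleGraph.mem_edgeSet] at hcd ⊢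
    rw [hyspec]; exact hcd
  have hxmem : x ∈ s(a,b) := by rw [← hxspec]; exact Sym2.mem_mk_right p x
  have hxq : x ≠ q := fun hxq => hq2 (hxq ▸ hxmem)
  have hpq : p ≠ q := fun hpq => hq2 (hpq ▸ hp1)
  -- p, q ∈ {u, v} and p ≠ q
  by_cases hx2 : x ∈ s(c,d)
  · -- x = y, so x is common neighbor of p and q
    have hxy : x = y := by
      rw [← hyspec] at hx2
      rcases Sym2.mem_iff.mp hx2 with h | h
      · exact absurd h hxq
      · exact h
    have hqx : G.Adj q x := hxy ▸ hqy
    exfalso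
    rcases hpu' with rfl | rfl
    · rcases hqu' with rfl | rfl
      · exact hpq rfl
      · exact hno x hpx hqx
    · rcases hqu' with rfl | rfl
      · exact hno x hqx hpx
      · exact hpq rfl
  · refine ⟨x, ?_, ?_, distinguish hG hxmem hx2⟩
    · intro hxu
      rcases hpu' with rfl | rfl
      · exact hpx.ne (hxu.symm)
      · rcases hqu' with rfl | rfl
        · exact hxq hxu
        · exact hpq rfl
    · intro hxv
      rcases hpu' with rfl | rfl
      · rcases hqu' with rfl | rfl
        · exact hpq rfl
        · exact hxq hxv
      · exact hpx.ne (hxv.symm)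

theorem common_neighbor_of_edim_eq {V : Type*} [Fintype V] (G : SimpleGraph V)
    (hG : G.Connected) (h : edim G = Fintype.card V - 1) :
    ∀ u v : V, u ≠ v → ∃ w : V, G.Adj u w ∧ G.Adj v w := by
  intro u v huv
  by_contra hno
  push_neg at hno
  classical
  have hn2 : 2 ≤ Fintype.card V := Fintype.one_lt_card_iff_nontrivial.mpr ⟨u, v, huv⟩
  set S : Finset V := Finset.univ \ {u, v} with hS
  have hcard : S.card = Fintype.card V - 2 := by
    rw [hS, Finset.card_sdiff_of_subset (Finset.subset_univ _), Finset.card_univ]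
    congr 1
    rw [Finset.card_insert_of_notMem (by simp [huv]), Finset.card_singleton]
  have hgen : IsEdgeMetricGenerator G ↑S := by
    intro e₁ he₁ e₂ he₂ hne
    induction e₁ using Sym2.ind with
    | _ a b =>
    induction e₂ using Sym2.ind with
    | _ c d =>
    obtain ⟨w, hwu, hwv, hw⟩ := key hG hno ((SimpleGraph.mem_edgeSet G).mp he₁)
      ((SimpleGraph.mem_edgeSet G).mp he₂) hne
    exact ⟨w, by simp [hS, hwu, hwv], hw⟩
  have hle : edim G ≤ Fintype.card V - 2 := Nat.sInf_le ⟨S, hcard, hgen⟩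
  omega
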